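/- Let N ≥ 3 be a fixed integer and m an integer with 1 ≤ m < N/2. Let j = (j_{-m}, j_{-m+1}, ..., j_m) be a (2m+1)-tuple of elements of {0,1,...,N} such that j_{-m} = j_m = N−m and j_0 ≠ N. For each ε ∈ (0,1/3] let Y^{(ε)} = (Y^{(ε)}_k, k ∈ ℤ) be a strictly stationary Markov chain satisfying Condition S(N,ε). Then P(⋂_{k=−m}^{m} {Y^{(ε)}_k = j_k}) = o(ε^{2N−1}) as ε → 0+, i.e. P(⋂_{k=−m}^{m} {Y^{(ε)}_k = j_k}) / ε^{2N−1} → 0 as ε → 0+. -/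

import Mathlib

open MeasureTheory ProbabilityTheory Filter Set
open scoped ENNReal Topology

noncomputable section

variable {Ω : Type*}

/-- The σ-field generated by the random variables `X k`, `k ∈ S`. -/
def sigmaOf [MeasurableSpace Ω] (X : ℤ → Ω → ℝ) (S : Set ℤ) : MeasurableSpace Ω :=
  ⨆ k ∈ S, MeasurableSpace.comap (X k) inferInstance

/-- A sequence indexed by `ℤ` is strictly stationary if its law (as a measure on `ℤ → ℝ`)
is invariant under the index shift. -/
def StrictlyStationary [MeasurableSpace Ω] (P : Measure Ω) (X : ℤ → Ω → ℝ) : Prop :=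
  ∀ n : ℤ, Measure.map (fun ω => fun k : ℤ => X (k + n) ω) P
    = Measure.map (fun ω => fun k : ℤ => X k ω) P

/-- Markov chain: for each `k`, the past `σ(X_j, j ≤ k)` and the future `σ(X_j, j ≥ k)`
are conditionally independent given the present `σ(X_k)`. -/
def IsMarkovChain [MeasurableSpace Ω] (P : Measure Ω) (X : ℤ → Ω → ℝ) : Prop :=
  (∀ k, Measurable (X k)) ∧
  ∀ k : ℤ, ∀ A B : Set Ω, MeasurableSet[sigmaOf X (Set.Iic k)] A →
    MeasurableSet[sigmaOf X (Set.Ici k)] B →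
    (fun ω => (P[A.indicator (fun _ => (1:ℝ)) | sigmaOf X {k}]) ω *
              (P[B.indicator (fun _ => (1:ℝ)) | sigmaOf X {k}]) ω)
      =ᵐ[P] P[(A ∩ B).indicator (fun _ => (1:ℝ)) | sigmaOf X {k}]

/-- Covariance of two real random variables. -/
def covP [MeasurableSpace Ω] (P : Measure Ω) (f g : Ω → ℝ) : ℝ :=
  ∫ ω, (f ω - ∫ x, f x ∂P) * (g ω - ∫ x, g x ∂P) ∂P

/-- Correlation coefficient of two real random variables (with the convention 0/0 = 0). -/
def corrP [MeasurableSpace Ω] (P : Measure Ω) (f g : Ω → ℝ) : ℝ :=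
  covP P f g / (Real.sqrt (covP P f f) * Real.sqrt (covP P g g))

/-- Maximal correlation coefficient ρ(𝒜,ℬ): the supremum of |Corr(f,g)| over square-integrable
`f` measurable w.r.t. `mA` and `g` measurable w.r.t. `mB`. -/
def maxCorr (mA mB : MeasurableSpace Ω) [MeasurableSpace Ω] (P : Measure Ω) : ℝ :=
  sSup {r : ℝ | ∃ f g : Ω → ℝ, Measurable[mA] f ∧ Measurable[mB] g ∧
    MemLp f 2 P ∧ MemLp g 2 P ∧ r = |corrP P f g|}

/-- η(A,B) = P(A∩B)/(P(A)P(B)) (with the convention 0/0 = 0). -/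
def etaP [MeasurableSpace Ω] (P : Measure Ω) (A B : Set Ω) : ℝ :=
  (P (A ∩ B)).toReal / ((P A).toReal * (P B).toReal)

/-- ψ dependence coefficient, with values in `[0,∞]`. -/
def psiDep (mA mB : MeasurableSpace Ω) [MeasurableSpace Ω] (P : Measure Ω) : ℝ≥0∞ :=
  ⨆ (A : Set Ω) (B : Set Ω) (_ : MeasurableSet[mA] A) (_ : MeasurableSet[mB] B)
    (_ : 0 < P A) (_ : 0 < P B), ENNReal.ofReal |etaP P A B - 1|

/-- A finite partition of `Ω` into `m`-measurable events of positive probability. -/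
def IsFinPartition (m : MeasurableSpace Ω) [MeasurableSpace Ω] (P : Measure Ω)
    {n : ℕ} (A : Fin n → Set Ω) : Prop :=
  (∀ i, MeasurableSet[m] (A i)) ∧ (∀ i, 0 < P (A i)) ∧
  (Pairwise fun i j => Disjoint (A i) (A j)) ∧ (⋃ i, A i) = Set.univ

/-- Coefficient of information I(𝒜,ℬ), valued in `[0,∞]`
(note `Real.log 0 = 0`, so `0 log 0 = 0` automatically). -/
def infoCoef (mA mB : MeasurableSpace Ω) [MeasurableSpace Ω] (P : Measure Ω) : ℝ≥0∞ :=
  ⨆ (nI : ℕ) (nJ : ℕ) (A : Fin nI → Set Ω) (B : Fin nJ → Set Ω)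
    (_ : IsFinPartition mA P A) (_ : IsFinPartition mB P B),
    ENNReal.ofReal (∑ i, ∑ j,
      (P (A i)).toReal * (P (B j)).toReal *
        (etaP P (A i) (B j) * Real.log (etaP P (A i) (B j))))

/-- β dependence coefficient (absolute regularity coefficient). -/
def betaDep (mA mB : MeasurableSpace Ω) [MeasurableSpace Ω] (P : Measure Ω) : ℝ :=
  sSup {r : ℝ | ∃ (nI nJ : ℕ) (A : Fin nI → Set Ω) (B : Fin nJ → Set Ω),
    IsFinPartition mA P A ∧ IsFinPartition mB P B ∧
    r = (1/2) * ∑ i, ∑ j,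
      |(P (A i ∩ B j)).toReal - (P (A i)).toReal * (P (B j)).toReal|}

/-- ρ(X,n) -/
def rhoMix [MeasurableSpace Ω] (P : Measure Ω) (X : ℤ → Ω → ℝ) (n : ℕ) : ℝ :=
  maxCorr (sigmaOf X (Set.Iic 0)) (sigmaOf X (Set.Ici (n:ℤ))) P

/-- β(X,n) -/
def betaMix [MeasurableSpace Ω] (P : Measure Ω) (X : ℤ → Ω → ℝ) (n : ℕ) : ℝ :=
  betaDep (sigmaOf X (Set.Iic 0)) (sigmaOf X (Set.Ici (n:ℤ))) P

/-- I(X,n) -/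
def infoMix [MeasurableSpace Ω] (P : Measure Ω) (X : ℤ → Ω → ℝ) (n : ℕ) : ℝ≥0∞ :=
  infoCoef (sigmaOf X (Set.Iic 0)) (sigmaOf X (Set.Ici (n:ℤ))) P

/-- ψ(X,n) -/
def psiMix [MeasurableSpace Ω] (P : Measure Ω) (X : ℤ → Ω → ℝ) (n : ℕ) : ℝ≥0∞ :=
  psiDep (sigmaOf X (Set.Iic 0)) (sigmaOf X (Set.Ici (n:ℤ))) P

/-- Interlaced maximal correlation coefficient ρ*(X,n): the supremum of
ρ(σ(X_k, k ∈ S), σ(X_k, k ∈ T)) over nonempty disjoint S, T ⊂ ℤ with dist(S,T) ≥ n. -/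
def rhoStar [MeasurableSpace Ω] (P : Measure Ω) (X : ℤ → Ω → ℝ) (n : ℕ) : ℝ :=
  sSup {r : ℝ | ∃ S T : Set ℤ, S.Nonempty ∧ T.Nonempty ∧ Disjoint S T ∧
    (∀ s ∈ S, ∀ t ∈ T, (n:ℤ) ≤ |s - t|) ∧ r = maxCorr (sigmaOf X S) (sigmaOf X T) P}

/-- Condition S(N,ε) of Definition 2.1: a strictly stationary Markov chain with state space
`{0,1,...,N}` (as reals) whose joint law of `(Y_0, Y_1)` is as prescribed. -/
def ConditionS [MeasurableSpace Ω] (P : Measure Ω) (N : ℕ) (ε : ℝ) (Y : ℤ → Ω → ℝ) : Prop :=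
  StrictlyStationary P Y ∧ IsMarkovChain P Y ∧
  (∀ᵐ ω ∂P, ∃ i : ℕ, i ≤ N ∧ Y 0 ω = (i:ℝ)) ∧
  (P {ω | Y 0 ω = 0 ∧ Y 1 ω = 0}).toReal
      = 1 - 2 * (ε^(2*N-1) + ∑ u ∈ Finset.Icc 1 (N-1), ε^(2*u)) ∧
  (∀ m : ℕ, 1 ≤ m → m ≤ N - 1 →
    (P {ω | Y 0 ω = (m:ℝ) - 1 ∧ Y 1 ω = (m:ℝ)}).toReal = ε^(2*m) ∧
    (P {ω | Y 0 ω = (m:ℝ) ∧ Y 1 ω = (m:ℝ) - 1}).toReal = ε^(2*m)) ∧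
  (P {ω | Y 0 ω = (N:ℝ) - 1 ∧ Y 1 ω = (N:ℝ)}).toReal = ε^(2*N-1) ∧
  (P {ω | Y 0 ω = (N:ℝ) ∧ Y 1 ω = (N:ℝ) - 1}).toReal = ε^(2*N-1) ∧
  (∀ i j : ℕ, i ≤ N → j ≤ N → ((i = j ∧ 1 ≤ i) ∨ 2 ≤ |(i:ℤ) - (j:ℤ)|) →
    P {ω | Y 0 ω = (i:ℝ) ∧ Y 1 ω = (j:ℝ)} = 0)

/-- `m`-step transition probability `P(Y_m = j | Y_0 = i)` (with the convention 0/0 = 0). -/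
def transProb [MeasurableSpace Ω] (P : Measure Ω) (Y : ℤ → Ω → ℝ) (m : ℕ) (i j : ℕ) : ℝ :=
  (P {ω | Y 0 ω = (i:ℝ) ∧ Y (m:ℤ) ω = (j:ℝ)}).toReal / (P {ω | Y 0 ω = (i:ℝ)}).toReal

/-!
Write `A_k = ⋂_{i = -m}^{k} {Y_i = j_i}`. Along the cylinder every transition must have positive
probability, i.e. be a unit step (or `0 → 0`). A unit-step path from `N - m` at time `-m` back to
`N - m` at time `m` satisfies `N - 2m ≤ j_k ≤ N - |k|`, so, as `j_0 ≠ N`, it stays in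
`{1, …, N - 1}`, where a transition `a → b` has probability `ε ^ (a + b + 1)` and a state `a` has
probability at least `ε ^ (2a)`. By the Markov property
`P(A_{k+1}) P(Y_k = a) = P(A_k) P(Y_k = a, Y_{k+1} = b)`, so each step after the first multiplies
the bound by `ε ^ (b - a + 1)`, giving the exponent `j_{-m} + j_m + 2m = 2N`: the cylinder has
probability at most `ε ^ (2N) = o(ε ^ (2N - 1))`.
-/

def pathCylinder (Y : ℤ → Ω → ℝ) (x : ℤ → ℝ) (a b : ℤ) : Set Ω :=
  {ω | ∀ k, a ≤ k → k ≤ b → Y k ω = x k}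

lemma pathCylinder_self (Y : ℤ → Ω → ℝ) (x : ℤ → ℝ) (a : ℤ) :
    pathCylinder Y x a a = Y a ⁻¹' {x a} := by
  ext ω
  simp only [pathCylinder, mem_ofPred_eq, mem_preimage, mem_singleton_iff]
  exact ⟨fun h => h a le_rfl le_rfl, fun h k hak hka => le_antisymm hka hak ▸ h⟩

lemma pathCylinder_succ (Y : ℤ → Ω → ℝ) (x : ℤ → ℝ) {a k : ℤ} (hak : a ≤ k) :
    pathCylinder Y x a (k + 1) = pathCylinder Y x a k ∩ Y (k + 1) ⁻¹' {x (k + 1)} := by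
  ext ω
  simp only [pathCylinder, mem_ofPred_eq, mem_inter_iff, mem_preimage, mem_singleton_iff]
  refine ⟨fun h => ⟨fun i hai hik => h i hai (by omega), h _ (by omega) le_rfl⟩,
    fun ⟨h, hk⟩ i hai hik => ?_⟩
  rcases (show i ≤ k ∨ i = k + 1 by omega) with hik | rfl
  exacts [h i hai hik, hk]

lemma pathCylinder_subset_preimage (Y : ℤ → Ω → ℝ) (x : ℤ → ℝ) {a b : ℤ} (hab : a ≤ b) :
    pathCylinder Y x a b ⊆ Y b ⁻¹' {x b} :=
  fun _ h => h b hab le_rfl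

lemma pathCylinder_subset_step (Y : ℤ → Ω → ℝ) (x : ℤ → ℝ) {a b k : ℤ} (hak : a ≤ k)
    (hkb : k < b) :
    pathCylinder Y x a b ⊆ Y k ⁻¹' {x k} ∩ Y (k + 1) ⁻¹' {x (k + 1)} :=
  fun _ h => ⟨h k hak hkb.le, h (k + 1) (by omega) hkb⟩

section Markov

variable [MeasurableSpace Ω]

lemma sigmaOf_singleton (X : ℤ → Ω → ℝ) (k : ℤ) :
    sigmaOf X {k} = MeasurableSpace.comap (X k) inferInstance := by
  simp [sigmaOf]

lemma sigmaOf_le {X : ℤ → Ω → ℝ} (hX : ∀ k, Measurable (X k)) (S : Set ℤ) :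
    sigmaOf X S ≤ ‹MeasurableSpace Ω› :=
  iSup₂_le fun k _ => (hX k).comap_le

lemma measurableSet_sigmaOf_preimage (X : ℤ → Ω → ℝ) {S : Set ℤ} {k : ℤ} (hk : k ∈ S)
    {s : Set ℝ} (hs : MeasurableSet s) : MeasurableSet[sigmaOf X S] (X k ⁻¹' s) :=
  le_iSup₂ (f := fun k (_ : k ∈ S) => MeasurableSpace.comap (X k) inferInstance) k hk _
    ⟨s, hs, rfl⟩

lemma measurableSet_pathCylinder (Y : ℤ → Ω → ℝ) (x : ℤ → ℝ) (a b : ℤ) :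
    MeasurableSet[sigmaOf Y (Iic b)] (pathCylinder Y x a b) := by
  have : pathCylinder Y x a b = ⋂ k ∈ Icc a b, Y k ⁻¹' {x k} := by
    ext ω; simp [pathCylinder]
  rw [this]
  exact MeasurableSet.biInter (s := Icc a b) (f := fun k => Y k ⁻¹' {x k}) (to_countable _)
    fun k hk => measurableSet_sigmaOf_preimage (S := Iic b) Y hk.2 (measurableSet_singleton _)

variable {P : Measure Ω} [IsFiniteMeasure P] {Y : ℤ → Ω → ℝ}

lemma IsMarkovChain.exists_measureReal_inter_eq_mul (hM : IsMarkovChain P Y) (k : ℤ) (c : ℝ)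
    {B : Set Ω} (hB : MeasurableSet[sigmaOf Y (Ici k)] B) :
    ∃ v : ℝ, ∀ A, MeasurableSet[sigmaOf Y (Iic k)] A → A ⊆ Y k ⁻¹' {c} →
      P.real (A ∩ B) = v * P.real A := by
  obtain ⟨hY, hmarkov⟩ := hM
  have hle := sigmaOf_le hY
  set fB := P[B.indicator (fun _ => (1:ℝ)) | sigmaOf Y {k}]
  -- `fB` is measurable for `σ(Y k)`, hence a function of `Y k`; `v` is its value at `c`.
  have hfB : fB.FactorsThrough (Y k) := by
    have : Measurable[MeasurableSpace.comap (Y k) inferInstance] fB := by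
      rw [← sigmaOf_singleton]; exact stronglyMeasurable_condExp.measurable
    exact this.factorsThrough
  refine ⟨Function.extend (Y k) fB 0 c, fun A hA hAC => ?_⟩
  have hC : MeasurableSet[sigmaOf Y {k}] (Y k ⁻¹' {c}) :=
    measurableSet_sigmaOf_preimage Y (mem_singleton k) (measurableSet_singleton c)
  set fA := P[A.indicator (fun _ => (1:ℝ)) | sigmaOf Y {k}]
  have hfA : fA =ᵐ[P] (Y k ⁻¹' {c}).indicator fA := by
    have := condExp_indicator (μ := P) ((integrable_const (1:ℝ)).indicator (hle (Iic k) A hA)) hC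
    rwa [indicator_indicator, inter_eq_self_of_subset_right hAC] at this
  have hprod : (fun ω => fA ω * fB ω) =ᵐ[P] fun ω => Function.extend (Y k) fB 0 c * fA ω := by
    filter_upwards [hfA] with ω hω
    by_cases hωC : Y k ω = c
    · rw [← hωC, hfB.extend_apply, mul_comm]
    · rw [hω, indicator_of_notMem (show ω ∉ Y k ⁻¹' {c} from hωC), zero_mul, mul_zero]
  have hAB : MeasurableSet (A ∩ B) := (hle (Iic k) A hA).inter (hle (Ici k) B hB)
  calc P.real (A ∩ B) = ∫ ω, P[(A ∩ B).indicator (fun _ => (1:ℝ)) | sigmaOf Y {k}] ω ∂P := by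
        rw [integral_condExp (hle {k})]; exact (integral_indicator_one hAB).symm
    _ = ∫ ω, fA ω * fB ω ∂P := integral_congr_ae (hmarkov k A B hA hB).symm
    _ = Function.extend (Y k) fB 0 c * P.real A := by
        rw [integral_congr_ae hprod, integral_const_mul, integral_condExp (hle {k})]
        exact congrArg _ (integral_indicator_one (hle (Iic k) A hA))

lemma IsMarkovChain.measureReal_inter_mul (hM : IsMarkovChain P Y) {k : ℤ} {c : ℝ}
    {A B : Set Ω} (hA : MeasurableSet[sigmaOf Y (Iic k)] A) (hAC : A ⊆ Y k ⁻¹' {c})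
    (hB : MeasurableSet[sigmaOf Y (Ici k)] B) :
    P.real (A ∩ B) * P.real (Y k ⁻¹' {c}) = P.real A * P.real (Y k ⁻¹' {c} ∩ B) := by
  obtain ⟨v, hv⟩ := hM.exists_measureReal_inter_eq_mul k c hB
  rw [hv A hA hAC, hv _ (measurableSet_sigmaOf_preimage Y (mem_Iic.2 le_rfl)
    (measurableSet_singleton c)) subset_rfl]
  ring

lemma IsMarkovChain.measureReal_pathCylinder_succ_mul (hM : IsMarkovChain P Y) (x : ℤ → ℝ)
    {a k : ℤ} (hak : a ≤ k) :
    P.real (pathCylinder Y x a (k + 1)) * P.real (Y k ⁻¹' {x k}) =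
      P.real (pathCylinder Y x a k) * P.real (Y k ⁻¹' {x k} ∩ Y (k + 1) ⁻¹' {x (k + 1)}) := by
  rw [pathCylinder_succ Y x hak]
  exact hM.measureReal_inter_mul (measurableSet_pathCylinder Y x a k)
    (pathCylinder_subset_preimage Y x hak)
    (measurableSet_sigmaOf_preimage Y (by simp) (measurableSet_singleton _))

end Markov

section Stationary

variable [MeasurableSpace Ω] {P : Measure Ω} {Y : ℤ → Ω → ℝ}

lemma StrictlyStationary.measure_preimage_shift (hS : StrictlyStationary P Y)
    (hY : ∀ k, Measurable (Y k)) (n : ℤ) {S : Set (ℤ → ℝ)} (hSm : MeasurableSet S) :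
    P ((fun ω k => Y (k + n) ω) ⁻¹' S) = P ((fun ω k => Y k ω) ⁻¹' S) := by
  rw [← Measure.map_apply (measurable_pi_lambda _ fun k => hY (k + n)) hSm, hS n,
    Measure.map_apply (measurable_pi_lambda _ hY) hSm]

lemma StrictlyStationary.measure_preimage_eq (hS : StrictlyStationary P Y)
    (hY : ∀ k, Measurable (Y k)) (n : ℤ) (a : ℝ) : P (Y n ⁻¹' {a}) = P (Y 0 ⁻¹' {a}) := by
  convert hS.measure_preimage_shift hY n (measurable_pi_apply 0 (measurableSet_singleton a))
    using 2 <;> ext <;> simp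

lemma StrictlyStationary.measure_step_eq (hS : StrictlyStationary P Y)
    (hY : ∀ k, Measurable (Y k)) (n : ℤ) (a b : ℝ) :
    P (Y n ⁻¹' {a} ∩ Y (n + 1) ⁻¹' {b}) = P (Y 0 ⁻¹' {a} ∩ Y 1 ⁻¹' {b}) := by
  convert hS.measure_preimage_shift hY n
    ((measurable_pi_apply 0 (measurableSet_singleton a)).inter
      (measurable_pi_apply 1 (measurableSet_singleton b))) using 2 <;> ext <;> simp [add_comm]

end Stationary

lemma abs_sub_le_of_abs_sub_succ_le_one {f : ℤ → ℤ} {a b : ℤ}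
    (hf : ∀ k, a ≤ k → k < b → |f (k + 1) - f k| ≤ 1) {k l : ℤ} (hak : a ≤ k) (hkl : k ≤ l)
    (hlb : l ≤ b) : |f l - f k| ≤ l - k := by
  induction l, hkl using Int.leInduction with
  | base => simp
  | succ l hkl ih =>
    calc |f (l + 1) - f k| ≤ |f (l + 1) - f l| + |f l - f k| := abs_sub_le _ _ _
      _ ≤ 1 + (l - k) := add_le_add (hf l (by omega) (by omega)) (ih (by omega))
      _ = l + 1 - k := by ring

lemma mem_Ioo_of_abs_step_le_one {N m : ℕ} (hm2 : 2 * m < N) {j : ℤ → ℕ}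
    (hjm : j (-(m:ℤ)) = N - m) (hjm' : j (m:ℤ) = N - m) (hj0 : j 0 ≠ N)
    (hstep : ∀ k, -(m:ℤ) ≤ k → k < m → |(j (k + 1) : ℤ) - j k| ≤ 1) {k : ℤ}
    (hk : -(m:ℤ) ≤ k) (hk' : k ≤ m) : j k ∈ Ioo 0 N := by
  have hleft := abs_le.1 <| abs_sub_le_of_abs_sub_succ_le_one (f := fun k => (j k : ℤ)) hstep
    le_rfl hk hk'
  have hright := abs_le.1 <| abs_sub_le_of_abs_sub_succ_le_one (f := fun k => (j k : ℤ)) hstep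
    hk hk' le_rfl
  simp only [hjm, hjm'] at hleft hright
  -- `N - 2 * m ≤ j k ≤ N - |k|`, so `j k = N` only at `k = 0`.
  rcases eq_or_ne k 0 with rfl | hk0
  · exact ⟨by omega, lt_of_le_of_ne (by omega) hj0⟩
  · exact ⟨by omega, by omega⟩

section PathBound

variable [MeasurableSpace Ω] {P : Measure Ω} [IsFiniteMeasure P] {Y : ℤ → Ω → ℝ}

lemma IsMarkovChain.measureReal_pathCylinder_le (hM : IsMarkovChain P Y) {x : ℤ → ℕ} {ε : ℝ}
    (hε : 0 < ε) {a b : ℤ} (hab : a < b)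
    (htrans : ∀ k, a ≤ k → k < b →
      P.real (Y k ⁻¹' {(x k : ℝ)} ∩ Y (k + 1) ⁻¹' {(x (k + 1) : ℝ)}) ≤
        ε ^ ((x k : ℤ) + x (k + 1) + 1))
    (hstate : ∀ k, a < k → k < b → ε ^ (2 * (x k : ℤ)) ≤ P.real (Y k ⁻¹' {(x k : ℝ)})) :
    P.real (pathCylinder Y (fun k => x k) a b) ≤ ε ^ ((x a : ℤ) + x b + (b - a)) := by
  induction b, (show a + 1 ≤ b by omega) using Int.leInduction with
  | base =>
    rw [pathCylinder_succ Y _ le_rfl, pathCylinder_self, add_sub_cancel_left]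
    exact htrans a le_rfl (lt_add_one a)
  | succ k hk ih =>
    have hε2k : 0 < ε ^ (2 * (x k : ℤ)) := zpow_pos hε _
    refine le_of_mul_le_mul_right ?_ hε2k
    calc P.real (pathCylinder Y (fun k => x k) a (k + 1)) * ε ^ (2 * (x k : ℤ))
        ≤ P.real (pathCylinder Y (fun k => x k) a (k + 1)) * P.real (Y k ⁻¹' {(x k : ℝ)}) :=
          mul_le_mul_of_nonneg_left (hstate k (by omega) (by omega)) measureReal_nonneg
      _ = P.real (pathCylinder Y (fun k => x k) a k) *
            P.real (Y k ⁻¹' {(x k : ℝ)} ∩ Y (k + 1) ⁻¹' {(x (k + 1) : ℝ)}) :=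
          hM.measureReal_pathCylinder_succ_mul _ (by omega)
      _ ≤ ε ^ ((x a : ℤ) + x k + (k - a)) * ε ^ ((x k : ℤ) + x (k + 1) + 1) :=
          mul_le_mul (ih (by omega) (fun i hi hik => htrans i hi (by omega))
              (fun i hi hik => hstate i hi (by omega)))
            (htrans k (by omega) (lt_add_one k)) measureReal_nonneg (zpow_pos hε _).le
      _ = ε ^ ((x a : ℤ) + x (k + 1) + (k + 1 - a)) * ε ^ (2 * (x k : ℤ)) := by
          rw [← zpow_add₀ hε.ne', ← zpow_add₀ hε.ne']
          ring_nf

end PathBound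

namespace ConditionS

variable [MeasurableSpace Ω] {P : Measure Ω} {N : ℕ} {ε : ℝ} {Y : ℤ → Ω → ℝ}

lemma measure_step_eq_zero (hC : ConditionS P N ε Y) (k : ℤ) {a b : ℕ} (ha : a ≤ N)
    (hb : b ≤ N) (hab : (a = b ∧ 1 ≤ a) ∨ 2 ≤ |(a:ℤ) - (b:ℤ)|) :
    P (Y k ⁻¹' {(a:ℝ)} ∩ Y (k + 1) ⁻¹' {(b:ℝ)}) = 0 := by
  rw [hC.1.measure_step_eq hC.2.1.1]
  exact hC.2.2.2.2.2.2.2 a b ha hb hab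

lemma measureReal_step (hC : ConditionS P N ε Y) (k : ℤ) {a b : ℕ} (ha : 0 < a) (hb : 0 < b)
    (haN : a < N) (hbN : b < N) (hab : b = a + 1 ∨ a = b + 1) :
    P.real (Y k ⁻¹' {(a:ℝ)} ∩ Y (k + 1) ⁻¹' {(b:ℝ)}) = ε ^ ((a:ℤ) + b + 1) := by
  rw [measureReal_def, hC.1.measure_step_eq hC.2.1.1]
  rcases hab with rfl | rfl
  · rw [show (a:ℤ) + (a + 1 : ℕ) + 1 = (2 * (a + 1) : ℕ) by push_cast; ring, zpow_natCast,
      ← (hC.2.2.2.2.1 (a + 1) (by omega) (by omega)).1]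
    congr 2; ext; simp
  · rw [show ((b + 1 : ℕ) : ℤ) + b + 1 = (2 * (b + 1) : ℕ) by push_cast; ring, zpow_natCast,
      ← (hC.2.2.2.2.1 (b + 1) (by omega) (by omega)).2]
    congr 2; ext; simp

lemma zpow_le_measureReal [IsFiniteMeasure P] (hC : ConditionS P N ε Y) (k : ℤ) {a : ℕ}
    (ha : 0 < a) (haN : a < N) : ε ^ (2 * (a:ℤ)) ≤ P.real (Y k ⁻¹' {(a:ℝ)}) := by
  have hstep := (hC.2.2.2.2.1 a ha (by omega)).2
  rw [← zpow_natCast, Nat.cast_mul, Nat.cast_ofNat] at hstep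
  rw [measureReal_def, hC.1.measure_preimage_eq hC.2.1.1, ← hstep]
  exact ENNReal.toReal_mono (measure_ne_top P _) (measure_mono inter_subset_left)

lemma measure_pathCylinder_eq_zero (hC : ConditionS P N ε Y) {x : ℤ → ℕ} {a b k : ℤ}
    (hak : a ≤ k) (hkb : k < b) (hxk : x k ≤ N) (hxk' : x (k + 1) ≤ N)
    (hforb : (x k = x (k + 1) ∧ 1 ≤ x k) ∨ 2 ≤ |(x k : ℤ) - x (k + 1)|) :
    P (pathCylinder Y (fun k => x k) a b) = 0 :=
  measure_mono_null (pathCylinder_subset_step Y _ hak hkb)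
    (hC.measure_step_eq_zero k hxk hxk' hforb)

lemma measureReal_pathCylinder_le [IsFiniteMeasure P] (hC : ConditionS P N ε Y)
    (hε : 0 < ε) {x : ℤ → ℕ} {a b : ℤ} (hab : a < b)
    (hx : ∀ k, a ≤ k → k ≤ b → x k ∈ Ioo 0 N)
    (hstep : ∀ k, a ≤ k → k < b → x (k + 1) = x k + 1 ∨ x k = x (k + 1) + 1) :
    P.real (pathCylinder Y (fun k => x k) a b) ≤ ε ^ ((x a : ℤ) + x b + (b - a)) :=
  hC.2.1.measureReal_pathCylinder_le hε hab
    (fun k hak hkb => (hC.measureReal_step k (hx k hak hkb.le).1 (hx (k + 1) (by omega) hkb).1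
      (hx k hak hkb.le).2 (hx (k + 1) (by omega) hkb).2 (hstep k hak hkb)).le)
    (fun k hak hkb => hC.zpow_le_measureReal k (hx k hak.le hkb.le).1 (hx k hak.le hkb.le).2)

lemma measureReal_pathCylinder_le_pow [IsFiniteMeasure P] (hC : ConditionS P N ε Y)
    (hε : 0 < ε) {m : ℕ} (hm1 : 1 ≤ m) (hm2 : 2 * m < N) {j : ℤ → ℕ}
    (hjN : ∀ k : ℤ, -(m:ℤ) ≤ k → k ≤ (m:ℤ) → j k ≤ N)
    (hjm : j (-(m:ℤ)) = N - m) (hjm' : j (m:ℤ) = N - m) (hj0 : j 0 ≠ N) :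
    P.real (pathCylinder Y (fun k => j k) (-m) m) ≤ ε ^ (2 * N) := by
  by_cases hforb : ∃ k, -(m:ℤ) ≤ k ∧ k < m ∧
      ((j k = j (k + 1) ∧ 1 ≤ j k) ∨ 2 ≤ |(j k : ℤ) - j (k + 1)|)
  · obtain ⟨k, hk, hk', hjk⟩ := hforb
    rw [measureReal_def, hC.measure_pathCylinder_eq_zero hk hk' (hjN k hk hk'.le)
      (hjN (k + 1) (by omega) hk') hjk, ENNReal.toReal_zero]
    positivity
  push Not at hforb
  have hadj : ∀ k, -(m:ℤ) ≤ k → k < m →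
      (j k = j (k + 1) → j k < 1) ∧ -2 < (j k : ℤ) - j (k + 1) ∧ (j k : ℤ) - j (k + 1) < 2 :=
    fun k hk hk' => ⟨(hforb k hk hk').1, abs_lt.1 (hforb k hk hk').2⟩
  have hx : ∀ k, -(m:ℤ) ≤ k → k ≤ m → j k ∈ Ioo 0 N :=
    fun k => mem_Ioo_of_abs_step_le_one hm2 hjm hjm' hj0
      (fun i hi hi' => abs_le.2 (by have := hadj i hi hi'; omega))
  have hstep : ∀ k, -(m:ℤ) ≤ k → k < m → j (k + 1) = j k + 1 ∨ j k = j (k + 1) + 1 :=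
    fun k hk hk' => by have := hadj k hk hk'; have := (hx k hk hk'.le).1; omega
  calc P.real (pathCylinder Y (fun k => j k) (-m) m)
      ≤ ε ^ ((j (-(m:ℤ)) : ℤ) + j m + (m - -m)) :=
        hC.measureReal_pathCylinder_le hε (by omega) hx hstep
    _ = ε ^ (2 * N) := by
        rw [hjm, hjm', ← zpow_natCast]
        congr 1
        omega

end ConditionS

theorem conditionS_cylinder_little_o_general [MeasurableSpace Ω] (P : Measure Ω)
    [IsProbabilityMeasure P] (N : ℕ) (m : ℕ) (hm1 : 1 ≤ m) (hm2 : 2 * m < N)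
    (j : ℤ → ℕ) (hjN : ∀ k : ℤ, -(m:ℤ) ≤ k → k ≤ (m:ℤ) → j k ≤ N)
    (hjm : j (-(m:ℤ)) = N - m) (hjm' : j (m:ℤ) = N - m) (hj0 : j 0 ≠ N)
    (Y : ℝ → ℤ → Ω → ℝ)
    (hY : ∀ ε ∈ Set.Ioc (0:ℝ) (1/3), ConditionS P N ε (Y ε)) :
    Tendsto (fun ε : ℝ =>
        (P {ω | ∀ k : ℤ, -(m:ℤ) ≤ k → k ≤ (m:ℤ) → Y ε k ω = (j k : ℝ)}).toReal / ε^(2*N-1))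
      (𝓝[>] 0) (𝓝 0) := by
  refine squeeze_zero' ?_ ?_ (tendsto_nhdsWithin_of_tendsto_nhds tendsto_id)
  · filter_upwards [self_mem_nhdsWithin] with ε (hε : 0 < ε)
    positivity
  · filter_upwards [Ioc_mem_nhdsGT (show (0:ℝ) < 1 / 3 by norm_num)] with ε hε
    rw [id, div_le_iff₀ (pow_pos hε.1 _), ← pow_succ', Nat.sub_add_cancel (by omega)]
    exact (hY ε hε).measureReal_pathCylinder_le_pow hε.1 hm1 hm2 hjN hjm hjm' hj0

/-- Eq. (2.26): for a `(2m+1)`-tuple `j` of states with `j_{-m} = j_m = N−m` and `j_0 ≠ N`,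
`P(⋂_{k=-m}^{m} {Y^{(ε)}_k = j_k}) = o(ε^{2N−1})` as `ε → 0+`. -/
theorem conditionS_cylinder_little_o [MeasurableSpace Ω] (P : Measure Ω)
    [IsProbabilityMeasure P] (N : ℕ) (hN : 3 ≤ N) (m : ℕ) (hm1 : 1 ≤ m) (hm2 : 2 * m < N)
    (j : ℤ → ℕ) (hjN : ∀ k : ℤ, -(m:ℤ) ≤ k → k ≤ (m:ℤ) → j k ≤ N)
    (hjm : j (-(m:ℤ)) = N - m) (hjm' : j (m:ℤ) = N - m) (hj0 : j 0 ≠ N)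
    (Y : ℝ → ℤ → Ω → ℝ)
    (hY : ∀ ε ∈ Set.Ioc (0:ℝ) (1/3), ConditionS P N ε (Y ε)) :
    Tendsto (fun ε : ℝ =>
        (P {ω | ∀ k : ℤ, -(m:ℤ) ≤ k → k ≤ (m:ℤ) → Y ε k ω = (j k : ℝ)}).toReal / ε^(2*N-1))
      (𝓝[>] 0) (𝓝 0) :=
  conditionS_cylinder_little_o_general P N m hm1 hm2 j hjN hjm hjm' hj0 Y hY

end
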